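/- There are constants 0 < c ≤ C such that the following holds. Let u ≥ 8 be an integer, p = 1/u, and let n be an integer with n ≥ (2/p)·ln(1/p). Then c·(n/p)·ln(1/p) ≤ ℓ(n,p) ≤ C·(n/p)·ln(1/p); that is, the optimal deficiency is Θ((n/p)·log(1/p)). -/

import Mathlib

open Finset

attribute [local instance] Classical.propDecidable

noncomputable section

/-- There is a straight path (strictly increasing vertex sequence) from `i` to `j` in `H`. -/
def HasStraightPath {n : ℕ} (H : SimpleGraph (Fin n)) (i j : Fin n) : Prop :=
  ∃ (m : ℕ) (f : Fin (m + 1) → Fin n),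
    f 0 = i ∧ f (Fin.last m) = j ∧ StrictMono f ∧
    ∀ t : Fin m, H.Adj (f t.castSucc) (f t.succ)

/-- There is a straight path from `i` to `j` in `H` using at most `k` edges. -/
def HasStraightPathHop {n : ℕ} (H : SimpleGraph (Fin n)) (i j : Fin n) (k : ℕ) : Prop :=
  ∃ (m : ℕ) (f : Fin (m + 1) → Fin n), m ≤ k ∧
    f 0 = i ∧ f (Fin.last m) = j ∧ StrictMono f ∧
    ∀ t : Fin m, H.Adj (f t.castSucc) (f t.succ)

/-- The deficiency: number of pairs `i < j` with no straight path from `i` to `j`. -/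
def deficiency {n : ℕ} (H : SimpleGraph (Fin n)) : ℕ :=
  (Finset.univ.filter fun pq : Fin n × Fin n =>
    pq.1 < pq.2 ∧ ¬ HasStraightPath H pq.1 pq.2).card

/-- Expectation of `F` over the random subgraph of `G` keeping each edge
independently with probability `p`. -/
def graphExpect {V : Type} [Fintype V] (G : SimpleGraph V) (p : ℝ)
    (F : SimpleGraph V → ℝ) : ℝ :=
  ∑ S ∈ G.edgeFinset.powerset,
    p ^ S.card * (1 - p) ^ (G.edgeFinset.card - S.card) *
      F (SimpleGraph.fromEdgeSet (S : Set (Sym2 V)))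

/-- Probability of the event `A` for the random subgraph of `G` keeping each edge
independently with probability `p`. -/
def graphProb {V : Type} [Fintype V] (G : SimpleGraph V) (p : ℝ)
    (A : SimpleGraph V → Prop) : ℝ :=
  ∑ S ∈ G.edgeFinset.powerset.filter
      (fun (S : Finset (Sym2 V)) => A (SimpleGraph.fromEdgeSet (S : Set (Sym2 V)))),
    p ^ S.card * (1 - p) ^ (G.edgeFinset.card - S.card)

/-- The optimal deficiency `ℓ(n,p)`: expected deficiency of `D(K_n, p)`. -/
def optDeficiency (n : ℕ) (p : ℝ) : ℝ :=
  graphExpect (⊤ : SimpleGraph (Fin n)) p (fun H => (deficiency H : ℝ))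

/-!
Fix a vertex `i` and put `x = 1 - p`. Reveal the vertices `i + 1, i + 2, …` one at a time and let
`R_t` be the set of vertices of `[i, i + t]` reachable from `i` by straight paths. The next vertex
joins `R_t` unless all `|R_t|` edges from `R_t` to it are missing; these edges have not been looked
at yet, so this happens with probability `x ^ |R_t|` independently of the past. Hence `|R_t|` is a
Markov chain with an explicit law, `i` fails to reach `i + t + 1` with probability
`g_t(x) = E[x ^ |R_t|]`, and `ℓ(n, p) = ∑_{N < n} H_N(x)` with `H_N = ∑_{t < N} g_t`.

Upper bound: `g_{t+1}(z) = z g_t(z) + (1 - z) g_t(x z)` gives `H_N(z) ≤ z / (1 - z) + H_N(x z)`;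
iterating from `z = x` yields `H_N(x) ≤ ∑_k x^k / (1 - x^k) + N x^(N+1) ≤ (2 + log (1/p)) / p`,
the series being compared with `∑_k x^k / k = log (1/p)`.

Lower bound: by Jensen `g_t(x) ≥ x ^ E|R_t|`, and `E|R_t| ≤ (1 + p)^t ≤ 1/p` for
`t ≤ log (1/p) / p`, so `g_t(x) ≥ (1 - p)^(1/p) ≥ 1/4` there. Hence `H_N(x) ≥ D / 4` for
`N ≥ D = ⌊log (1/p) / p⌋`, and when `n ≥ 2 log (1/p) / p` at least half of the `N < n` qualify.
-/

section BernoulliExpect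

variable {α : Type*}

def bernoulliExpect (p : ℝ) (E : Finset α) (F : Finset α → ℝ) : ℝ :=
  ∑ S ∈ E.powerset, p ^ #S * (1 - p) ^ (#E - #S) * F S

variable {p : ℝ}

theorem bernoulliExpect_congr {E : Finset α} {F G : Finset α → ℝ}
    (h : ∀ S ⊆ E, F S = G S) : bernoulliExpect p E F = bernoulliExpect p E G :=
  Finset.sum_congr rfl fun S hS => by rw [h S (Finset.mem_powerset.1 hS)]

theorem bernoulliExpect_add (E : Finset α) (F G : Finset α → ℝ) :
    bernoulliExpect p E (fun S => F S + G S) = bernoulliExpect p E F + bernoulliExpect p E G := by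
  simp only [bernoulliExpect, mul_add, Finset.sum_add_distrib]

theorem bernoulliExpect_const_mul (E : Finset α) (c : ℝ) (F : Finset α → ℝ) :
    bernoulliExpect p E (fun S => c * F S) = c * bernoulliExpect p E F := by
  simp only [bernoulliExpect, Finset.mul_sum]
  exact Finset.sum_congr rfl fun _ _ => by ring

theorem bernoulliExpect_sum {ι : Type*} (s : Finset ι) (E : Finset α)
    (F : ι → Finset α → ℝ) :
    bernoulliExpect p E (fun S => ∑ i ∈ s, F i S) = ∑ i ∈ s, bernoulliExpect p E (F i) := by
  simp only [bernoulliExpect, Finset.mul_sum]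
  exact Finset.sum_comm

variable [DecidableEq α]

theorem bernoulliExpect_insert {a : α} {E : Finset α} (ha : a ∉ E) (F : Finset α → ℝ) :
    bernoulliExpect p (insert a E) F =
      (1 - p) * bernoulliExpect p E F + p * bernoulliExpect p E (fun S => F (insert a S)) := by
  simp only [bernoulliExpect, Finset.sum_powerset_insert ha, Finset.mul_sum,
    Finset.card_insert_of_notMem ha]
  congr 1 <;> refine Finset.sum_congr rfl fun S hS => ?_
  · rw [Nat.succ_sub (Finset.card_le_card (Finset.mem_powerset.1 hS)), pow_succ]
    ring
  · rw [Finset.card_insert_of_notMem fun h => ha (Finset.mem_powerset.1 hS h),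
      Nat.add_sub_add_right, pow_succ]
    ring

theorem bernoulliExpect_const (E : Finset α) (c : ℝ) : bernoulliExpect p E (fun _ => c) = c := by
  induction E using Finset.induction_on with
  | empty => simp [bernoulliExpect]
  | insert a E ha ih => rw [bernoulliExpect_insert ha, ih]; ring

theorem bernoulliExpect_union {E₀ E₁ : Finset α} (h : Disjoint E₀ E₁) (F : Finset α → ℝ) :
    bernoulliExpect p (E₀ ∪ E₁) F =
      bernoulliExpect p E₀ (fun S₀ => bernoulliExpect p E₁ (fun S₁ => F (S₀ ∪ S₁))) := by
  induction E₁ using Finset.induction_on generalizing F with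
  | empty => simp [bernoulliExpect]
  | insert a E₁ ha ih =>
    have haE₀ : a ∉ E₀ := Finset.disjoint_right.1 h (Finset.mem_insert_self a E₁)
    simp only [Finset.union_insert, bernoulliExpect_insert ha,
      bernoulliExpect_insert (Finset.notMem_union.2 ⟨haE₀, ha⟩),
      ih (h.mono_right (Finset.subset_insert a E₁)), bernoulliExpect_add,
      bernoulliExpect_const_mul]

theorem bernoulliExpect_ite_eq_empty (E : Finset α) :
    bernoulliExpect p E (fun S => if S = ∅ then 1 else 0) = (1 - p) ^ #E := by
  simp [bernoulliExpect]

theorem bernoulliExpect_ite_disjoint {B E : Finset α} (hB : B ⊆ E) (c d : ℝ) :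
    bernoulliExpect p E (fun S => if Disjoint S B then c else d) =
      (1 - p) ^ #B * c + (1 - (1 - p) ^ #B) * d := by
  have hmiss : ∀ S₀ ⊆ B, ∀ S₁ ⊆ E \ B, Disjoint (S₀ ∪ S₁) B ↔ S₀ = ∅ := by
    intro S₀ hS₀ S₁ hS₁
    rw [Finset.disjoint_union_left,
      and_iff_left (Finset.disjoint_of_subset_left hS₁ Finset.sdiff_disjoint)]
    exact ⟨fun h => Finset.bot_eq_empty ▸ h.eq_bot_of_le hS₀,
      fun h => h ▸ Finset.disjoint_empty_left B⟩
  rw [← Finset.union_sdiff_of_subset hB, bernoulliExpect_union Finset.disjoint_sdiff]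
  calc bernoulliExpect p B (fun S₀ => bernoulliExpect p (E \ B)
          (fun S₁ => if Disjoint (S₀ ∪ S₁) B then c else d))
      = bernoulliExpect p B (fun S₀ => d + (c - d) * if S₀ = ∅ then 1 else 0) := by
        refine bernoulliExpect_congr fun S₀ hS₀ => ?_
        rw [bernoulliExpect_congr (G := fun _ => if S₀ = ∅ then c else d)
          fun S₁ hS₁ => if_congr (hmiss S₀ hS₀ S₁ hS₁) rfl rfl, bernoulliExpect_const]
        split_ifs <;> ring
    _ = (1 - p) ^ #B * c + (1 - (1 - p) ^ #B) * d := by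
        rw [bernoulliExpect_add, bernoulliExpect_const, bernoulliExpect_const_mul,
          bernoulliExpect_ite_eq_empty]
        ring

/-- Deferred decisions: `R S`, hence `B (R S)`, is determined by `S \ A`, and the elements of `A`
are still unexposed. -/
theorem bernoulliExpect_exposure {β : Type*} {A E : Finset α} (hA : A ⊆ E)
    (R : Finset α → β) (B : β → Finset α) (hR : ∀ S T, T ⊆ A → R (S ∪ T) = R S)
    (hB : ∀ S, B (R S) ⊆ A) (F G : β → ℝ) :
    bernoulliExpect p E (fun S => if Disjoint S (B (R S)) then F (R S) else G (R S)) =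
      bernoulliExpect p E (fun S =>
        (1 - p) ^ #(B (R S)) * F (R S) + (1 - (1 - p) ^ #(B (R S))) * G (R S)) := by
  rw [← Finset.sdiff_union_of_subset hA, bernoulliExpect_union Finset.sdiff_disjoint,
    bernoulliExpect_union Finset.sdiff_disjoint]
  refine bernoulliExpect_congr fun S₀ hS₀ => ?_
  have hS₀B : Disjoint S₀ (B (R S₀)) :=
    Finset.disjoint_of_subset_left hS₀ (Finset.sdiff_disjoint.mono_right (hB S₀))
  rw [bernoulliExpect_congr (G := fun S₁ => if Disjoint S₁ (B (R S₀)) then F (R S₀) else G (R S₀))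
      fun S₁ hS₁ => by simp only [hR S₀ S₁ hS₁, Finset.disjoint_union_left, hS₀B, true_and],
    bernoulliExpect_ite_disjoint (hB S₀), bernoulliExpect_congr fun S₁ hS₁ => by rw [hR S₀ S₁ hS₁],
    bernoulliExpect_const]

end BernoulliExpect

section ReachLaw

/-- The law of the number of vertices of `[i, i + t]` reachable from `i` when edges are kept with
probability `1 - x`: from `r` reachable vertices, vertex `i + t + 1` is missed with probability
`x ^ r`. -/
def reachLaw (x : ℝ) : ℕ → ℕ → ℝ
  | 0, r => if r = 1 then 1 else 0
  | _ + 1, 0 => 0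
  | t + 1, r + 1 => x ^ (r + 1) * reachLaw x t (r + 1) + (1 - x ^ r) * reachLaw x t r

def reachPGF (x : ℝ) (t : ℕ) (z : ℝ) : ℝ := ∑ r ∈ range (t + 2), reachLaw x t r * z ^ r

def reachMean (x : ℝ) (t : ℕ) : ℝ := ∑ r ∈ range (t + 2), reachLaw x t r * r

variable {x : ℝ}

theorem reachLaw_zero_right (x : ℝ) (t : ℕ) : reachLaw x t 0 = 0 := by
  cases t <;> simp [reachLaw]

theorem reachLaw_eq_zero_of_lt (x : ℝ) {t r : ℕ} (h : t + 1 < r) : reachLaw x t r = 0 := by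
  induction t generalizing r with
  | zero => simp only [reachLaw, ite_eq_right_iff]; omega
  | succ t ih =>
    obtain ⟨r, rfl⟩ : ∃ r', r = r' + 1 := ⟨r - 1, by omega⟩
    simp only [reachLaw, ih (show t + 1 < r + 1 by omega), ih (show t + 1 < r by omega)]
    ring

theorem reachLaw_nonneg (hx0 : 0 ≤ x) (hx1 : x ≤ 1) (t r : ℕ) : 0 ≤ reachLaw x t r := by
  induction t generalizing r with
  | zero => simp only [reachLaw]; split_ifs <;> norm_num
  | succ t ih =>
    rcases r with _ | r
    · simp [reachLaw]
    · have := pow_le_one₀ hx0 hx1 (n := r)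
      exact add_nonneg (mul_nonneg (pow_nonneg hx0 _) (ih _)) (mul_nonneg (by linarith) (ih r))

theorem sum_reachLaw_succ_mul (x : ℝ) (t : ℕ) (φ : ℕ → ℝ) :
    ∑ r ∈ range (t + 3), reachLaw x (t + 1) r * φ r =
      ∑ r ∈ range (t + 2), reachLaw x t r * (x ^ r * φ r + (1 - x ^ r) * φ (r + 1)) := by
  rw [Finset.sum_range_succ', reachLaw_zero_right, zero_mul, add_zero]
  simp only [reachLaw, add_mul, mul_add, Finset.sum_add_distrib]
  congr 1
  · rw [Finset.sum_range_succ, reachLaw_eq_zero_of_lt x (show t + 1 < t + 2 by omega),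
      Finset.sum_range_succ' (fun r => reachLaw x t r * (x ^ r * φ r)), reachLaw_zero_right]
    simp only [mul_zero, zero_mul, add_zero]
    exact Finset.sum_congr rfl fun r _ => by ring
  · exact Finset.sum_congr rfl fun r _ => by ring

theorem sum_reachLaw (x : ℝ) (t : ℕ) : ∑ r ∈ range (t + 2), reachLaw x t r = 1 := by
  induction t with
  | zero => simp [reachLaw]
  | succ t ih =>
    calc ∑ r ∈ range (t + 3), reachLaw x (t + 1) r
        = ∑ r ∈ range (t + 3), reachLaw x (t + 1) r * 1 := by simp only [mul_one]
      _ = ∑ r ∈ range (t + 2), reachLaw x t r * (x ^ r * 1 + (1 - x ^ r) * 1) :=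
          sum_reachLaw_succ_mul x t _
      _ = 1 := by simp [ih]

theorem reachPGF_zero (x z : ℝ) : reachPGF x 0 z = z := by
  simp [reachPGF, reachLaw]

theorem reachPGF_succ (x : ℝ) (t : ℕ) (z : ℝ) :
    reachPGF x (t + 1) z = z * reachPGF x t z + (1 - z) * reachPGF x t (x * z) := by
  simp only [reachPGF, sum_reachLaw_succ_mul, Finset.mul_sum, ← Finset.sum_add_distrib]
  exact Finset.sum_congr rfl fun r _ => by ring

theorem reachMean_zero (x : ℝ) : reachMean x 0 = 1 := by
  simp [reachMean, reachLaw]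

theorem reachMean_succ (x : ℝ) (t : ℕ) :
    reachMean x (t + 1) = reachMean x t + 1 - reachPGF x t x := by
  have h : ∀ r ∈ range (t + 2), reachLaw x t r * (x ^ r * r + (1 - x ^ r) * ↑(r + 1)) =
      reachLaw x t r * r + reachLaw x t r - reachLaw x t r * x ^ r := fun r _ => by
    push_cast; ring
  rw [reachMean, sum_reachLaw_succ_mul, Finset.sum_congr rfl h, Finset.sum_sub_distrib,
    Finset.sum_add_distrib, sum_reachLaw, reachMean, reachPGF]

theorem reachPGF_nonneg (hx0 : 0 ≤ x) (hx1 : x ≤ 1) (t : ℕ) {z : ℝ} (hz : 0 ≤ z) :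
    0 ≤ reachPGF x t z :=
  Finset.sum_nonneg fun r _ => mul_nonneg (reachLaw_nonneg hx0 hx1 t r) (pow_nonneg hz r)

theorem reachPGF_le (hx0 : 0 ≤ x) (hx1 : x ≤ 1) (t : ℕ) {z : ℝ} (hz0 : 0 ≤ z) (hz1 : z ≤ 1) :
    reachPGF x t z ≤ z := by
  calc reachPGF x t z ≤ ∑ r ∈ range (t + 2), reachLaw x t r * z := by
        refine Finset.sum_le_sum fun r _ => ?_
        rcases r with _ | r
        · simp [reachLaw_zero_right]
        · exact mul_le_mul_of_nonneg_left (pow_le_of_le_one hz0 hz1 r.succ_ne_zero)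
            (reachLaw_nonneg hx0 hx1 t _)
    _ = z := by rw [← Finset.sum_mul, sum_reachLaw, one_mul]

theorem reachMean_le (hx0 : 0 ≤ x) (hx1 : x ≤ 1) (t : ℕ) : reachMean x t ≤ (2 - x) ^ t := by
  induction t with
  | zero => simp [reachMean_zero]
  | succ t ih =>
    have hstep : 1 - reachPGF x t x ≤ (1 - x) * reachMean x t := by
      have hbern : ∀ r ∈ range (t + 2),
          reachLaw x t r - reachLaw x t r * x ^ r ≤ (1 - x) * (reachLaw x t r * r) := by
        intro r _
        have := one_add_mul_le_pow (a := x - 1) (by linarith) r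
        rw [add_sub_cancel] at this
        nlinarith [reachLaw_nonneg hx0 hx1 t r]
      calc 1 - reachPGF x t x = ∑ r ∈ range (t + 2), (reachLaw x t r - reachLaw x t r * x ^ r) := by
            rw [Finset.sum_sub_distrib, sum_reachLaw, reachPGF]
        _ ≤ (1 - x) * reachMean x t := by
            rw [reachMean, Finset.mul_sum]; exact Finset.sum_le_sum hbern
    rw [reachMean_succ, pow_succ]
    nlinarith

theorem rpow_reachMean_le_reachPGF (hx0 : 0 < x) (hx1 : x ≤ 1) (t : ℕ) :
    x ^ reachMean x t ≤ reachPGF x t x := by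
  calc x ^ reachMean x t = ∏ r ∈ range (t + 2), (x ^ r) ^ reachLaw x t r := by
        rw [reachMean, Real.rpow_sum_of_pos hx0]
        refine Finset.prod_congr rfl fun r _ => ?_
        rw [mul_comm, Real.rpow_mul hx0.le, Real.rpow_natCast]
    _ ≤ reachPGF x t x :=
        Real.geom_mean_le_arith_mean_weighted _ _ _ (fun r _ => reachLaw_nonneg hx0.le hx1 t r)
          (sum_reachLaw x t) fun r _ => pow_nonneg hx0.le r

end ReachLaw

section PowerBounds

variable {x : ℝ}

theorem pow_mul_one_add_mul_le_one (hx0 : 0 ≤ x) (hx1 : x ≤ 1) (k : ℕ) :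
    x ^ k * (1 + k * (1 - x)) ≤ 1 := by
  have h : 1 + k * (1 - x) ≤ (2 - x) ^ k := by
    have := one_add_mul_le_pow (a := 1 - x) (by linarith) k
    rwa [show 1 + (1 - x) = 2 - x by ring] at this
  calc x ^ k * (1 + k * (1 - x)) ≤ x ^ k * (2 - x) ^ k :=
        mul_le_mul_of_nonneg_left h (pow_nonneg hx0 k)
    _ = (x * (2 - x)) ^ k := (mul_pow _ _ _).symm
    _ ≤ 1 := pow_le_one₀ (by nlinarith) (by nlinarith)

theorem pow_div_one_sub_pow_le (hx0 : 0 ≤ x) (hx1 : x < 1) (k : ℕ) :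
    x ^ (k + 1) / (1 - x ^ (k + 1)) ≤ x ^ (k + 1) + x ^ (k + 1) / (k + 1) / (1 - x) := by
  have hc : 0 < ((k : ℝ) + 1) * (1 - x) := mul_pos (by positivity) (sub_pos.2 hx1)
  have hkey : x ^ (k + 1) * (1 + ((k : ℝ) + 1) * (1 - x)) ≤ 1 := by
    simpa using pow_mul_one_add_mul_le_one hx0 hx1.le (k + 1)
  have hq := div_mul_cancel₀ (x ^ (k + 1)) hc.ne'
  rw [div_div, div_le_iff₀ (sub_pos.2 (pow_lt_one₀ hx0 hx1 k.add_one_ne_zero))]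
  nlinarith [mul_nonneg (div_nonneg (pow_nonneg hx0 (k + 1)) hc.le) (sub_nonneg.2 hkey)]

theorem sum_pow_div_one_sub_pow_le (hx0 : 0 ≤ x) (hx1 : x < 1) (K : ℕ) :
    ∑ k ∈ range K, x ^ (k + 1) / (1 - x ^ (k + 1)) ≤ (x - Real.log (1 - x)) / (1 - x) := by
  have hgeom : ∑ k ∈ range K, x ^ (k + 1) ≤ x / (1 - x) := by
    simpa [pow_succ', div_eq_mul_inv] using sum_le_hasSum (range K)
      (fun k _ => by positivity) ((hasSum_geometric_of_lt_one hx0 hx1).mul_left x)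
  have hlog : ∑ k ∈ range K, x ^ (k + 1) / (k + 1) ≤ -Real.log (1 - x) :=
    sum_le_hasSum (range K) (fun k _ => by positivity)
      (Real.hasSum_pow_div_log_of_abs_lt_one (by rwa [abs_of_nonneg hx0]))
  calc ∑ k ∈ range K, x ^ (k + 1) / (1 - x ^ (k + 1))
      ≤ ∑ k ∈ range K, (x ^ (k + 1) + x ^ (k + 1) / (k + 1) / (1 - x)) :=
        Finset.sum_le_sum fun k _ => pow_div_one_sub_pow_le hx0 hx1 k
    _ = ∑ k ∈ range K, x ^ (k + 1) + (∑ k ∈ range K, x ^ (k + 1) / (k + 1)) / (1 - x) := by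
        rw [Finset.sum_add_distrib, Finset.sum_div]
    _ ≤ x / (1 - x) + -Real.log (1 - x) / (1 - x) :=
        add_le_add hgeom (div_le_div_of_nonneg_right hlog (sub_pos.2 hx1).le)
    _ = (x - Real.log (1 - x)) / (1 - x) := by ring

end PowerBounds

section ReachPGFSum

def reachPGFSum (x : ℝ) (N : ℕ) (z : ℝ) : ℝ := ∑ t ∈ range N, reachPGF x t z

variable {x : ℝ}

theorem reachPGFSum_nonneg (hx0 : 0 ≤ x) (hx1 : x ≤ 1) (N : ℕ) {z : ℝ} (hz : 0 ≤ z) :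
    0 ≤ reachPGFSum x N z :=
  Finset.sum_nonneg fun t _ => reachPGF_nonneg hx0 hx1 t hz

theorem reachPGFSum_le_mul (hx0 : 0 ≤ x) (hx1 : x ≤ 1) (N : ℕ) {z : ℝ} (hz0 : 0 ≤ z)
    (hz1 : z ≤ 1) : reachPGFSum x N z ≤ N * z :=
  calc reachPGFSum x N z ≤ ∑ _t ∈ range N, z :=
        Finset.sum_le_sum fun t _ => reachPGF_le hx0 hx1 t hz0 hz1
    _ = N * z := by simp

theorem reachPGFSum_mono (hx0 : 0 ≤ x) (hx1 : x ≤ 1) {N M : ℕ} (h : N ≤ M) {z : ℝ}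
    (hz : 0 ≤ z) : reachPGFSum x N z ≤ reachPGFSum x M z :=
  Finset.sum_le_sum_of_subset_of_nonneg (Finset.range_subset_range.2 h) fun t _ _ =>
    reachPGF_nonneg hx0 hx1 t hz

theorem reachPGFSum_le_add (hx0 : 0 ≤ x) (hx1 : x ≤ 1) (N : ℕ) {z : ℝ} (hz0 : 0 ≤ z)
    (hz1 : z < 1) : reachPGFSum x N z ≤ z / (1 - z) + reachPGFSum x N (x * z) := by
  have key : (1 - z) * reachPGFSum x N z ≤ z + (1 - z) * reachPGFSum x N (x * z) := by
    rcases N with _ | N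
    · simpa [reachPGFSum] using hz0
    · have hsplit : reachPGFSum x (N + 1) z =
          z + z * reachPGFSum x N z + (1 - z) * reachPGFSum x N (x * z) := by
        rw [reachPGFSum, Finset.sum_range_succ', reachPGF_zero]
        simp only [reachPGF_succ, Finset.sum_add_distrib, ← Finset.mul_sum, reachPGFSum]
        ring
      have h1 := reachPGFSum_mono hx0 hx1 N.le_succ hz0
      have h2 := reachPGFSum_mono hx0 hx1 N.le_succ (mul_nonneg hx0 hz0)
      nlinarith [mul_le_mul_of_nonneg_left h1 hz0,
        mul_le_mul_of_nonneg_left h2 (sub_nonneg.2 hz1.le)]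
  rw [div_add' _ _ _ (sub_pos.2 hz1).ne', le_div_iff₀ (sub_pos.2 hz1)]
  linarith

theorem reachPGFSum_le_sum_add (hx0 : 0 ≤ x) (hx1 : x < 1) (N K : ℕ) :
    reachPGFSum x N x ≤
      ∑ k ∈ range K, x ^ (k + 1) / (1 - x ^ (k + 1)) + reachPGFSum x N (x ^ (K + 1)) := by
  induction K with
  | zero => simp
  | succ K ih =>
    have := reachPGFSum_le_add hx0 hx1.le N (pow_nonneg hx0 (K + 1))
      (pow_lt_one₀ hx0 hx1 K.add_one_ne_zero)
    rw [← pow_succ'] at this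
    rw [Finset.sum_range_succ]
    linarith

theorem reachPGFSum_le (hx0 : 0 ≤ x) (hx1 : x < 1) (N : ℕ) :
    reachPGFSum x N x ≤ (2 - Real.log (1 - x)) / (1 - x) := by
  have htail : reachPGFSum x N (x ^ (N + 1)) ≤ 1 / (1 - x) := by
    have h1 := reachPGFSum_le_mul hx0 hx1.le N (pow_nonneg hx0 (N + 1))
      (pow_le_one₀ hx0 hx1.le)
    have h2 := pow_mul_one_add_mul_le_one hx0 hx1.le N
    have h3 : x ^ (N + 1) ≤ x ^ N := pow_le_pow_of_le_one hx0 hx1.le N.le_succ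
    rw [le_div_iff₀ (sub_pos.2 hx1)]
    nlinarith [mul_le_mul_of_nonneg_right (h1.trans (mul_le_mul_of_nonneg_left h3 N.cast_nonneg))
      (sub_nonneg.2 hx1.le), pow_nonneg hx0 N]
  calc reachPGFSum x N x ≤ (x - Real.log (1 - x)) / (1 - x) + 1 / (1 - x) := by
        linarith [reachPGFSum_le_sum_add hx0 hx1 N N, sum_pow_div_one_sub_pow_le hx0 hx1 N]
    _ ≤ (2 - Real.log (1 - x)) / (1 - x) := by
        rw [← add_div]
        exact div_le_div_of_nonneg_right (by linarith) (sub_pos.2 hx1).le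

end ReachPGFSum

section LowerBound

variable {p : ℝ}

theorem quarter_le_one_sub_rpow_inv (hp0 : 0 < p) (hp : p ≤ 1 / 4) :
    1 / 4 ≤ (1 - p) ^ (1 / p) := by
  have hq : 0 < 1 - p := by linarith
  have hlog : -(4 / 3) * p ≤ Real.log (1 - p) := by
    refine le_trans ?_ (Real.one_sub_inv_le_log_of_pos hq)
    rw [le_sub_iff_add_le, ← le_sub_iff_add_le', inv_le_iff_one_le_mul₀ hq]
    nlinarith
  have hlog4 : Real.log (1 / 4) = -(2 * Real.log 2) := by
    rw [one_div, Real.log_inv, show (4 : ℝ) = 2 ^ 2 by norm_num, Real.log_pow]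
    push_cast
    ring
  rw [Real.rpow_def_of_pos hq, ← Real.log_le_iff_le_exp (by norm_num), hlog4]
  have : -(4 / 3) ≤ Real.log (1 - p) * (1 / p) := by
    rw [mul_one_div, le_div_iff₀ hp0]
    exact hlog
  linarith [Real.log_two_gt_d9]

theorem quarter_le_reachPGF (hp0 : 0 < p) (hp : p ≤ 1 / 4) {t : ℕ}
    (ht : t ≤ Real.log (1 / p) / p) : 1 / 4 ≤ reachPGF (1 - p) t (1 - p) := by
  have hmean : reachMean (1 - p) t ≤ 1 / p :=
    calc reachMean (1 - p) t ≤ (1 + p) ^ t := by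
          simpa [show 2 - (1 - p) = 1 + p by ring] using
            reachMean_le (x := 1 - p) (by linarith) (by linarith) t
      _ ≤ Real.exp p ^ t := by
          gcongr
          linarith [Real.add_one_le_exp p]
      _ = Real.exp (t * p) := (Real.exp_nat_mul p t).symm
      _ ≤ Real.exp (Real.log (1 / p)) := Real.exp_le_exp.2 ((le_div_iff₀ hp0).1 ht)
      _ = 1 / p := Real.exp_log (by positivity)
  calc (1 / 4 : ℝ) ≤ (1 - p) ^ (1 / p) := quarter_le_one_sub_rpow_inv hp0 hp
    _ ≤ (1 - p) ^ reachMean (1 - p) t :=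
        Real.rpow_le_rpow_of_exponent_ge (by linarith) (by linarith) hmean
    _ ≤ reachPGF (1 - p) t (1 - p) := rpow_reachMean_le_reachPGF (by linarith) (by linarith) t

theorem le_reachPGFSum (hp0 : 0 < p) (hp : p ≤ 1 / 4) {D : ℕ}
    (hD : (D : ℝ) ≤ Real.log (1 / p) / p) : (D : ℝ) / 4 ≤ reachPGFSum (1 - p) D (1 - p) :=
  calc (D : ℝ) / 4 = ∑ _t ∈ range D, (1 / 4 : ℝ) := by
        rw [Finset.sum_const, Finset.card_range, nsmul_eq_mul]
        ring
    _ ≤ reachPGFSum (1 - p) D (1 - p) := Finset.sum_le_sum fun t ht =>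
        quarter_le_reachPGF hp0 hp ((Nat.cast_le.2 (Finset.mem_range.1 ht).le).trans hD)

end LowerBound

section StraightPath

variable {n : ℕ}

theorem HasStraightPath.refl (H : SimpleGraph (Fin n)) (i : Fin n) : HasStraightPath H i i :=
  ⟨0, fun _ => i, rfl, rfl, Fin.strictMono_iff_lt_succ.2 fun t => t.elim0, fun t => t.elim0⟩

theorem HasStraightPath.le {H : SimpleGraph (Fin n)} {i j : Fin n} (h : HasStraightPath H i j) :
    i ≤ j := by
  obtain ⟨m, f, rfl, rfl, hf, -⟩ := h
  exact hf.monotone (Fin.zero_le _)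

theorem HasStraightPath.mono_of_adj {G H : SimpleGraph (Fin n)} {i v : Fin n}
    (h : HasStraightPath G i v) (hGH : ∀ a b, a ≤ v → b ≤ v → G.Adj a b → H.Adj a b) :
    HasStraightPath H i v := by
  obtain ⟨m, f, h0, rfl, hf, hadj⟩ := h
  exact ⟨m, f, h0, rfl, hf, fun t => hGH _ _ (hf.monotone (Fin.le_last _))
    (hf.monotone (Fin.le_last _)) (hadj t)⟩

theorem hasStraightPath_iff_exists_adj {H : SimpleGraph (Fin n)} {i j : Fin n} (hij : i < j) :
    HasStraightPath H i j ↔ ∃ v < j, HasStraightPath H i v ∧ H.Adj v j := by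
  constructor
  · rintro ⟨_ | m, f, h0, hl, hf, hadj⟩
    · exact absurd (h0.symm.trans hl) hij.ne
    · refine ⟨f (Fin.last m).castSucc, hl ▸ hf (Fin.castSucc_lt_last _),
        ⟨m, Fin.init f, h0, rfl, hf.comp Fin.strictMono_castSucc, fun t => ?_⟩, ?_⟩
      · simpa only [Fin.init, Fin.succ_castSucc] using hadj t.castSucc
      · simpa [hl] using hadj (Fin.last m)
  · rintro ⟨v, hvj, ⟨m, f, h0, hl, hf, hadj⟩, hv⟩
    refine ⟨m + 1, Fin.snoc f j, by simpa using h0, by simp,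
      Fin.insertNth_last' j f ▸
        Fin.strictMono_insertNth_last hf j (hl ▸ hvj), fun t => ?_⟩
    obtain ⟨s, rfl⟩ | rfl := t.eq_castSucc_or_eq_last
    · simpa only [Fin.snoc_castSucc, Fin.succ_castSucc] using hadj s
    · simpa [hl] using hv

end StraightPath

section ReachSet

variable {n : ℕ}

def reachSet (H : SimpleGraph (Fin n)) (i : Fin n) (m : ℕ) : Finset (Fin n) :=
  univ.filter fun v => v.val ≤ m ∧ HasStraightPath H i v

variable {H : SimpleGraph (Fin n)} {i w : Fin n} {m : ℕ}

theorem mem_reachSet {v : Fin n} :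
    v ∈ reachSet H i m ↔ v.val ≤ m ∧ HasStraightPath H i v := by
  simp [reachSet]

theorem reachSet_self : reachSet H i i.val = {i} := by
  ext v
  rw [mem_reachSet, Finset.mem_singleton]
  refine ⟨fun ⟨hv, hpath⟩ => le_antisymm (Fin.le_def.2 hv) hpath.le, ?_⟩
  rintro rfl
  exact ⟨le_rfl, HasStraightPath.refl H v⟩

theorem card_reachSet_succ (hw : w.val = m + 1) :
    #(reachSet H i (m + 1)) = #(reachSet H i m) + if HasStraightPath H i w then 1 else 0 := by
  have hsplit : reachSet H i (m + 1) =
      reachSet H i m ∪ ({w} : Finset (Fin n)).filter (HasStraightPath H i) := by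
    ext v
    by_cases hp : HasStraightPath H i v
    · simp only [mem_reachSet, hp, Finset.mem_union, Finset.mem_filter, Finset.mem_singleton,
        Fin.ext_iff, hw, and_true]
      omega
    · simp [mem_reachSet, hp]
  rw [hsplit, Finset.card_union_of_disjoint, Finset.filter_singleton]
  · split_ifs <;> simp
  · refine Finset.disjoint_left.2 fun v hv hv' => ?_
    simp only [mem_reachSet, Finset.mem_filter, Finset.mem_singleton] at hv hv'
    rw [hv'.1, hw] at hv
    omega

theorem hasStraightPath_iff_exists_mem_reachSet (hw : w.val = m + 1) (hi : i.val ≤ m) :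
    HasStraightPath H i w ↔ ∃ v ∈ reachSet H i m, H.Adj v w := by
  rw [hasStraightPath_iff_exists_adj (Fin.lt_def.2 (by omega))]
  simp only [mem_reachSet, Fin.lt_def, hw, Nat.lt_succ_iff]
  exact ⟨fun ⟨v, hv, hp, ha⟩ => ⟨v, ⟨hv, hp⟩, ha⟩, fun ⟨v, ⟨hv, hp⟩, ha⟩ => ⟨v, hv, hp, ha⟩⟩

theorem reachSet_fromEdgeSet_union {S T : Finset (Sym2 (Fin n))}
    (hT : ∀ e ∈ T, ∃ a ∈ e, m < a.val) :
    reachSet (.fromEdgeSet ↑(S ∪ T)) i m = reachSet (.fromEdgeSet ↑S) i m := by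
  ext v
  simp only [mem_reachSet, and_congr_right_iff]
  refine fun hv => ⟨fun h => h.mono_of_adj fun a b ha hb hab => ?_,
    fun h => h.mono_of_adj fun a b _ _ hab =>
      SimpleGraph.fromEdgeSet_mono (Finset.coe_subset.2 Finset.subset_union_left) hab⟩
  rw [SimpleGraph.fromEdgeSet_adj, Finset.coe_union, Set.mem_union] at hab
  rw [SimpleGraph.fromEdgeSet_adj]
  refine ⟨hab.1.resolve_right fun hT' => ?_, hab.2⟩
  obtain ⟨c, hc, hmc⟩ := hT _ hT'
  rw [Fin.le_def] at ha hb
  rcases Sym2.mem_iff.1 hc with rfl | rfl <;> omega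

end ReachSet

section RandomGraph

variable {n : ℕ} {p : ℝ}

theorem bernoulliExpect_ite_hasStraightPath {i w : Fin n} {m : ℕ} (hw : w.val = m + 1)
    (hi : i.val ≤ m) (F G : ℕ → ℝ) :
    bernoulliExpect p (⊤ : SimpleGraph (Fin n)).edgeFinset (fun S =>
        if HasStraightPath (.fromEdgeSet ↑S) i w then G #(reachSet (.fromEdgeSet ↑S) i m)
        else F #(reachSet (.fromEdgeSet ↑S) i m)) =
      bernoulliExpect p (⊤ : SimpleGraph (Fin n)).edgeFinset (fun S =>
        (1 - p) ^ #(reachSet (.fromEdgeSet ↑S) i m) * F #(reachSet (.fromEdgeSet ↑S) i m) +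
          (1 - (1 - p) ^ #(reachSet (.fromEdgeSet ↑S) i m)) *
            G #(reachSet (.fromEdgeSet ↑S) i m)) := by
  set R : Finset (Sym2 (Fin n)) → Finset (Fin n) := fun S => reachSet (.fromEdgeSet ↑S) i m
  set B : Finset (Fin n) → Finset (Sym2 (Fin n)) := fun r => r.image fun v => s(v, w)
  have hne : ∀ S, ∀ v ∈ R S, v ≠ w := fun S v hv h => by
    rw [mem_reachSet, h, hw] at hv
    omega
  have hpath : ∀ S : Finset (Sym2 (Fin n)),
      HasStraightPath (.fromEdgeSet ↑S) i w ↔ ¬ Disjoint S (B (R S)) := fun S => by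
    rw [hasStraightPath_iff_exists_mem_reachSet hw hi, Finset.not_disjoint_iff]
    simp only [B, Finset.mem_image, SimpleGraph.fromEdgeSet_adj, Finset.mem_coe]
    exact ⟨fun ⟨v, hv, he, _⟩ => ⟨_, he, v, hv, rfl⟩,
      fun ⟨_, he, v, hv, hev⟩ => ⟨v, hv, hev ▸ he, hne S v hv⟩⟩
  have hcard : ∀ r, #(B r) = #r := fun r =>
    Finset.card_image_of_injective _ fun _ _ h => Sym2.congr_left.1 h
  have := bernoulliExpect_exposure (p := p)
    (Finset.filter_subset (w ∈ ·) (⊤ : SimpleGraph (Fin n)).edgeFinset) R B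
    (fun S T hT => reachSet_fromEdgeSet_union fun e he =>
      ⟨w, (Finset.mem_filter.1 (hT he)).2, by omega⟩)
    (fun S e he => by
      obtain ⟨v, hv, rfl⟩ := Finset.mem_image.1 he
      exact Finset.mem_filter.2 ⟨by simpa using hne S v hv, Sym2.mem_mk_right v w⟩)
    (fun r => F #r) (fun r => G #r)
  simp only [hcard] at this
  rw [← this]
  refine bernoulliExpect_congr fun S _ => ?_
  by_cases h : Disjoint S (B (R S)) <;> simp [h, hpath S, R]

theorem bernoulliExpect_card_reachSet {i : Fin n} {t : ℕ} (ht : i.val + t < n) (φ : ℕ → ℝ) :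
    bernoulliExpect p (⊤ : SimpleGraph (Fin n)).edgeFinset
        (fun S => φ #(reachSet (.fromEdgeSet ↑S) i (i.val + t))) =
      ∑ r ∈ range (t + 2), reachLaw (1 - p) t r * φ r := by
  induction t generalizing φ with
  | zero =>
    simp [reachSet_self, bernoulliExpect_const, reachLaw]
  | succ t ih =>
    set w : Fin n := ⟨i.val + t + 1, ht⟩
    calc bernoulliExpect p (⊤ : SimpleGraph (Fin n)).edgeFinset
          (fun S => φ #(reachSet (.fromEdgeSet ↑S) i (i.val + t + 1)))
        = bernoulliExpect p (⊤ : SimpleGraph (Fin n)).edgeFinset (fun S =>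
            if HasStraightPath (.fromEdgeSet ↑S) i w
            then φ (#(reachSet (.fromEdgeSet ↑S) i (i.val + t)) + 1)
            else φ #(reachSet (.fromEdgeSet ↑S) i (i.val + t))) :=
          bernoulliExpect_congr fun S _ => by
            rw [card_reachSet_succ (w := w) rfl]
            split_ifs <;> rfl
      _ = _ := bernoulliExpect_ite_hasStraightPath (w := w) rfl (Nat.le_add_right _ _) φ
          (fun r => φ (r + 1))
      _ = _ := ih (by omega) fun r => (1 - p) ^ r * φ r + (1 - (1 - p) ^ r) * φ (r + 1)
      _ = _ := (sum_reachLaw_succ_mul _ t φ).symm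

theorem bernoulliExpect_not_hasStraightPath {i j : Fin n} (hij : i < j) :
    bernoulliExpect p (⊤ : SimpleGraph (Fin n)).edgeFinset
        (fun S => if HasStraightPath (.fromEdgeSet ↑S) i j then 0 else 1) =
      reachPGF (1 - p) (j.val - i.val - 1) (1 - p) := by
  have hj : j.val = i.val + (j.val - i.val - 1) + 1 := by rw [Fin.lt_def] at hij; omega
  rw [bernoulliExpect_ite_hasStraightPath hj (Nat.le_add_right _ _) (fun _ => 1) (fun _ => 0)]
  simpa [reachPGF] using bernoulliExpect_card_reachSet (p := p) (by omega) (fun r => (1 - p) ^ r)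

end RandomGraph

section Deficiency

theorem sum_ite_fin_lt_eq_sum_range (n : ℕ) (f : ℕ → ℝ) :
    ∑ i : Fin n, ∑ j : Fin n, (if i.val < j.val then f (j.val - i.val - 1) else 0) =
      ∑ N ∈ range n, ∑ t ∈ range N, f t := by
  have inner : ∀ i : ℕ, ∑ j ∈ range n, (if i < j then f (j - i - 1) else 0) =
      ∑ t ∈ range (n - 1 - i), f t := fun i => by
    rw [← Finset.sum_filter, show (range n).filter (i < ·) = Finset.Ico (i + 1) n by
      ext; simp; omega, Finset.sum_Ico_eq_sum_range, show n - (i + 1) = n - 1 - i by omega]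
    exact Finset.sum_congr rfl fun t _ => by congr 1; omega
  rw [Fin.sum_univ_eq_sum_range (fun i => ∑ j : Fin n, if i < j.val then f (j.val - i - 1) else 0)]
  conv_lhs =>
    enter [2, i]
    rw [Fin.sum_univ_eq_sum_range (fun j => if i < j then f (j - i - 1) else 0), inner]
  exact Finset.sum_range_reflect (fun N => ∑ t ∈ range N, f t) n

theorem graphExpect_eq_bernoulliExpect {V : Type} [Fintype V] (G : SimpleGraph V) (p : ℝ)
    (F : SimpleGraph V → ℝ) :
    graphExpect G p F = bernoulliExpect p G.edgeFinset (fun S => F (.fromEdgeSet ↑S)) := rfl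

theorem optDeficiency_eq_sum (n : ℕ) (p : ℝ) :
    optDeficiency n p = ∑ N ∈ range n, reachPGFSum (1 - p) N (1 - p) := by
  have hpair : ∀ i j : Fin n, bernoulliExpect p (⊤ : SimpleGraph (Fin n)).edgeFinset
      (fun S => if i < j ∧ ¬ HasStraightPath (.fromEdgeSet ↑S) i j then 1 else 0) =
        if i.val < j.val then reachPGF (1 - p) (j.val - i.val - 1) (1 - p) else 0 := fun i j => by
    split_ifs with hij
    · rw [← bernoulliExpect_not_hasStraightPath hij]
      exact bernoulliExpect_congr fun S _ => by simp [Fin.lt_def, hij]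
    · simpa [Fin.lt_def, hij] using bernoulliExpect_const _ (0 : ℝ)
  have hdef : optDeficiency n p = bernoulliExpect p (⊤ : SimpleGraph (Fin n)).edgeFinset
      (fun S => ∑ i : Fin n, ∑ j : Fin n,
        if i < j ∧ ¬ HasStraightPath (.fromEdgeSet ↑S) i j then 1 else 0) := by
    rw [optDeficiency, graphExpect_eq_bernoulliExpect]
    -- the two `edgeFinset`s of `⊤` are built from different `Fintype` instances
    congr! with S
    rw [deficiency, Finset.natCast_card_filter, ← Finset.univ_product_univ, Finset.sum_product]
  simp only [hdef, bernoulliExpect_sum, hpair]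
  exact sum_ite_fin_lt_eq_sum_range n fun t => reachPGF (1 - p) t (1 - p)

end Deficiency

section Bounds

variable {n : ℕ} {p : ℝ}

theorem optDeficiency_le (hp0 : 0 < p) (hL : 2 ≤ Real.log (1 / p)) :
    optDeficiency n p ≤ 2 * (n / p) * Real.log (1 / p) := by
  have hp1 : p < 1 := by
    by_contra! h
    linarith [Real.log_nonpos (by positivity) ((div_le_one hp0).2 h)]
  have hterm : ∀ N, reachPGFSum (1 - p) N (1 - p) ≤ 2 * Real.log (1 / p) / p := fun N => by
    have := reachPGFSum_le (x := 1 - p) (by linarith) (by linarith) N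
    rw [sub_sub_cancel] at this
    refine this.trans (div_le_div_of_nonneg_right ?_ hp0.le)
    rw [one_div, Real.log_inv] at hL ⊢
    linarith
  rw [optDeficiency_eq_sum]
  calc ∑ N ∈ range n, reachPGFSum (1 - p) N (1 - p)
      ≤ ∑ _N ∈ range n, 2 * Real.log (1 / p) / p := Finset.sum_le_sum fun N _ => hterm N
    _ = 2 * (n / p) * Real.log (1 / p) := by simp; ring

theorem le_optDeficiency (hp0 : 0 < p) (hL : 2 ≤ Real.log (1 / p))
    (hn : 2 / p * Real.log (1 / p) ≤ n) :
    1 / 16 * (n / p) * Real.log (1 / p) ≤ optDeficiency n p := by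
  set L := Real.log (1 / p)
  have hp4 : p ≤ 1 / 4 := by
    have h : (4 : ℝ) ≤ 1 / p := by
      refine (Real.log_le_log_iff (by norm_num) (by positivity)).1 ?_
      rw [show (4 : ℝ) = 2 ^ 2 by norm_num, Real.log_pow]
      push_cast
      linarith [Real.log_two_lt_d9]
    rw [le_div_iff₀ hp0] at h
    linarith
  have hLp : 2 ≤ L / p := (le_div_iff₀ hp0).2 (by linarith)
  set D := ⌊L / p⌋₊
  have hD : (D : ℝ) ≤ L / p := Nat.floor_le (by linarith)
  have hD' : L / p - 1 < D := Nat.sub_one_lt_floor _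
  have hn' : 2 * (L / p) ≤ n := by rwa [div_mul_eq_mul_div, mul_div_assoc] at hn
  have hDn : D ≤ n := by exact_mod_cast (hD.trans (by linarith) : (D : ℝ) ≤ n)
  have hterm : ∀ N ∈ Finset.Ico D n, (D : ℝ) / 4 ≤ reachPGFSum (1 - p) N (1 - p) := fun N hN =>
    (le_reachPGFSum hp0 hp4 hD).trans
      (reachPGFSum_mono (by linarith) (by linarith) (Finset.mem_Ico.1 hN).1 (by linarith))
  calc 1 / 16 * (n / p) * L = (n / 2) * (L / p / 2) / 4 := by ring
    _ ≤ (n - D) * D / 4 := by gcongr <;> linarith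
    _ = ∑ _N ∈ Finset.Ico D n, (D : ℝ) / 4 := by simp [Nat.cast_sub hDn]; ring
    _ ≤ ∑ N ∈ Finset.Ico D n, reachPGFSum (1 - p) N (1 - p) := Finset.sum_le_sum hterm
    _ ≤ ∑ N ∈ range n, reachPGFSum (1 - p) N (1 - p) :=
        Finset.sum_le_sum_of_subset_of_nonneg
          (fun N hN => Finset.mem_range.2 (Finset.mem_Ico.1 hN).2) fun N _ _ => reachPGFSum_nonneg (by linarith) (by linarith) N (by linarith)
    _ = optDeficiency n p := (optDeficiency_eq_sum n p).symm

end Bounds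

theorem stmt_7 :
    ∃ c C : ℝ, 0 < c ∧ c ≤ C ∧
      ∀ u : ℕ, 8 ≤ u → ∀ p : ℝ, p = 1 / (u : ℝ) →
      ∀ n : ℕ, (2 / p) * Real.log (1 / p) ≤ (n : ℝ) →
        c * ((n : ℝ) / p) * Real.log (1 / p) ≤ optDeficiency n p ∧
          optDeficiency n p ≤ C * ((n : ℝ) / p) * Real.log (1 / p) := by
  refine ⟨1 / 16, 2, by norm_num, by norm_num, fun u hu p hp n hn => ?_⟩
  have hu8 : (8 : ℝ) ≤ u := by exact_mod_cast hu
  have hp0 : 0 < p := by rw [hp]; positivity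
  have hL : 2 ≤ Real.log (1 / p) := by
    rw [hp, one_div_one_div]
    calc (2 : ℝ) ≤ Real.log (2 ^ 3) := by
          rw [Real.log_pow]; push_cast; linarith [Real.log_two_gt_d9]
      _ ≤ Real.log u := Real.log_le_log (by norm_num) (by linarith)
  exact ⟨le_optDeficiency hp0 hL hn, optDeficiency_le hp0 hL⟩
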